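/- arXiv:2104.04861 — 4 statements merged into one kernel-verified Lean document; each statement's English description precedes it below -/
import Mathlib

section
/- For every q = 2^f with f ≥ 2, the set {1, q(q−1), q(q+1), q²+1} is not contained in the set {1, 2⁶·3⁴, 2⁵·3³·5, 2⁵·3⁴, 2⁶·3³, 2⁴·3⁴, 2³·3³·5, 2⁵·3³, 2³·3⁴, 2⁶·3², 2⁴·3³, 3⁴·5, 2⁶·5}. -/
/-- For every `q = 2^f` with `f ≥ 2`, the codegree set `{1, q(q−1), q(q+1), q²+1}` of
`PSL(2, 2^f)` is not contained in the codegree set of `U₄(2)`. -/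
theorem cod_PSL_two_not_subset_codU42 (f : ℕ) (hf : 2 ≤ f) :
    ¬ ({1, 2^f * (2^f - 1), 2^f * (2^f + 1), (2^f)^2 + 1} : Set ℕ) ⊆
      ({1, 2^6*3^4, 2^5*3^3*5, 2^5*3^4, 2^6*3^3, 2^4*3^4, 2^3*3^3*5, 2^5*3^3, 2^3*3^4,
        2^6*3^2, 2^4*3^3, 3^4*5, 2^6*5} : Set ℕ) := by
  intro hsub
  have hmem : (2^f)^2 + 1 ∈ ({1, 2^6*3^4, 2^5*3^3*5, 2^5*3^4, 2^6*3^3, 2^4*3^4, 2^3*3^3*5,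
      2^5*3^3, 2^3*3^4, 2^6*3^2, 2^4*3^3, 3^4*5, 2^6*5} : Set ℕ) := by
    apply hsub
    right; right; right
    rfl
  obtain ⟨k, hk⟩ : 2 ∣ (2^f)^2 := dvd_pow (dvd_pow_self 2 (by omega)) (by norm_num)
  have hpow : (2^f)^2 = 2^(2*f) := by rw [← pow_mul, mul_comm]
  have h404 : (2:ℕ)^(2*f) ≠ 404 := by
    rcases le_or_gt (2*f) 8 with h | h
    · have : (2:ℕ)^(2*f) ≤ 2^8 := Nat.pow_le_pow_right (by norm_num) h
      omega
    · have : (2:ℕ)^9 ≤ 2^(2*f) := Nat.pow_le_pow_right (by norm_num) h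
      omega
  simp only [Set.mem_insert_iff, Set.mem_singleton_iff] at hmem
  rcases hmem with h|h|h|h|h|h|h|h|h|h|h|h|h <;> rw [hk] at h <;>
    first
    | omega
    | (rw [← hk, hpow] at h; norm_num at h)
end

section
/- For every odd prime power q = p^f > 5, the set {1, q(q−1)/2, q(q+1)/2, (q²−1)/2, q(q−ε(q))} with ε(q) = (−1)^((q−1)/2) is not contained in the set {1, 2⁴·3²·7, 2⁵·3³, 2⁴·3³, 2⁵·3², 2⁵·7, 2³·3³, 3³·7}. -/
/-- The codegree set of `U₃(3)` (from the ATLAS). -/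
def codU33 : Set ℕ :=
  {1, 2^4*3^2*7, 2^5*3^3, 2^4*3^3, 2^5*3^2, 2^5*7, 2^3*3^3, 3^3*7}

/-- For every odd prime power `q = p^f > 5`, the codegree set of `PSL(2,q)`,
`{1, q(q−1)/2, q(q+1)/2, (q²−1)/2, q(q−ε(q))}` with `ε(q) = (−1)^((q−1)/2)`,
is not contained in the codegree set of `U₃(3)`. -/
theorem cod_PSL_two_odd_not_subset_codU33 (p f q : ℕ) (hp : p.Prime) (hodd : Odd p)
    (hq : q = p ^ f) (h5 : 5 < q) :
    ¬ ({1, q * (q - 1) / 2, q * (q + 1) / 2, (q ^ 2 - 1) / 2,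
        q * (if Even ((q - 1) / 2) then q - 1 else q + 1)} : Set ℕ) ⊆ codU33 := by
  intro hsub
  have hoddq : Odd q := hq ▸ hodd.pow
  obtain ⟨k, hk⟩ := hoddq
  have h1 : q * (q - 1) / 2 ∈ codU33 :=
    hsub (Set.mem_insert_of_mem _ (Set.mem_insert _ _))
  have hmul : q * (q - 1) = 2 * ((2 * k + 1) * k) := by
    have hq1 : q - 1 = 2 * k := by omega
    rw [hq1, hk]; ring
  have hval : q * (q - 1) / 2 = (2 * k + 1) * k := by
    rw [hmul]; exact Nat.mul_div_cancel_left _ two_pos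
  rw [hval] at h1
  simp only [codU33, Set.mem_insert_iff, Set.mem_singleton_iff] at h1
  norm_num at h1
  have hk3 : 3 ≤ k := by omega
  have hb : (2 * k + 1) * k ≤ 1008 := by omega
  have hkk : k * k ≤ 1008 := le_trans (by nlinarith) hb
  have hk31 : k ≤ 31 := by nlinarith
  interval_cases k <;> omega
end

section
/- For all integers n ≥ 14, the 13 integers n−1, n(n−3)/2, (n−1)(n−2)/2, n(n−1)(n−5)/6, n(n−2)(n−4)/3, (n−1)(n−2)(n−3)/6, n(n−1)(n−2)(n−7)/24, n(n−1)(n−3)(n−6)/8, n(n−1)(n−4)(n−5)/12, (n−1)(n−2)(n−3)(n−4)/24, n(n−1)(n−2)(n−3)(n−9)/120, n(n−1)(n−2)(n−4)(n−8)/24, n(n−1)(n−2)(n−5)(n−7)/24 are pairwise distinct. -/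
/-- The degrees of the irreducible characters of `A_n` corresponding to the partitions
`(n−1,1)`, `(n−2,2)`, `(n−2,1,1)`, `(n−3,3)`, `(n−3,2,1)`, `(n−3,1³)`, `(n−4,4)`,
`(n−4,3,1)`, `(n−4,2,2)`, `(n−4,1⁴)`, `(n−5,5)`, `(n−5,4,1)`, `(n−5,3,2)`. -/
def anDegrees (n : ℕ) : List ℕ :=
  [n - 1, n * (n - 3) / 2, (n - 1) * (n - 2) / 2, n * (n - 1) * (n - 5) / 6,
   n * (n - 2) * (n - 4) / 3, (n - 1) * (n - 2) * (n - 3) / 6,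
   n * (n - 1) * (n - 2) * (n - 7) / 24, n * (n - 1) * (n - 3) * (n - 6) / 8,
   n * (n - 1) * (n - 4) * (n - 5) / 12, (n - 1) * (n - 2) * (n - 3) * (n - 4) / 24,
   n * (n - 1) * (n - 2) * (n - 3) * (n - 9) / 120,
   n * (n - 1) * (n - 2) * (n - 4) * (n - 8) / 24,
   n * (n - 1) * (n - 2) * (n - 5) * (n - 7) / 24]

/-- If `a * d + c * d ≤ b * c` then `a / c < b / d` (floor division on `ℕ`). -/
private lemma myDivLtDivAux {a b c d : ℕ} (hc : 0 < c) (hd : 0 < d)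
    (h : a * d + c * d ≤ b * c) : a / c < b / d := by
  have key : (a / c + 1) * d ≤ b := by
    have h1 : a / c * c ≤ a := Nat.div_mul_le_self a c
    have h2 : (a / c + 1) * d * c ≤ b * c := by
      calc (a / c + 1) * d * c = (a / c * c) * d + c * d := by ring
        _ ≤ a * d + c * d := by
            exact Nat.add_le_add_right (Nat.mul_le_mul_right d h1) _
        _ ≤ b * c := h
    exact Nat.le_of_mul_le_mul_right h2 hc
  have : a / c + 1 ≤ b / d := (Nat.le_div_iff_mul_le hd).2 key
  omega

private lemma nodup13 (a0 a1 a2 a3 a4 a5 a6 a7 a8 a9 a10 a11 a12 : ℕ)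
    (h1 : a0 < a1) (h2 : a1 < a2) (h3 : a2 < a3) (h4 : a3 < a5) (h5 : a5 < a4)
    (h6 : a4 < a6) (h7 : a6 < a9) (h8 : a9 < a8) (h9 : a8 < a7) (h10 : a7 < a10)
    (h11 : a10 < a11) (h12 : a11 < a12) :
    ([a0,a1,a2,a3,a4,a5,a6,a7,a8,a9,a10,a11,a12] : List ℕ).Nodup := by
  simp only [List.nodup_cons, List.mem_cons, List.not_mem_nil, or_false, List.nodup_nil,
    and_true, not_or, ne_eq]
  norm_num
  omega

private lemma ineq0 (m : ℕ) : (m + 20) < (m + 21) * (m + 18) / 2 := by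
  have h0 : ((m + 20)) / 1 = (m + 20) := Nat.div_one _
  rw [← h0]
  apply myDivLtDivAux (by norm_num) (by norm_num)
  have hR : ((m + 20)) * 2 + 1 * 2 + (1 * m ^ 2 + 37 * m + 336) = ((m + 21) * (m + 18)) * 1 := by ring
  have hpos : 0 ≤ 1 * m ^ 2 + 37 * m + 336 := Nat.zero_le _
  linarith

private lemma ineq1 (m : ℕ) : (m + 21) * (m + 18) / 2 < (m + 20) * (m + 19) / 2 := by
  apply myDivLtDivAux (by norm_num) (by norm_num)
  have hR : ((m + 21) * (m + 18)) * 2 + 2 * 2 + (0) = ((m + 20) * (m + 19)) * 2 := by ring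
  have hpos : 0 ≤ 0 := Nat.zero_le _
  linarith

private lemma ineq2 (m : ℕ) : (m + 20) * (m + 19) / 2 < (m + 21) * (m + 20) * (m + 16) / 6 := by
  apply myDivLtDivAux (by norm_num) (by norm_num)
  have hR : ((m + 20) * (m + 19)) * 6 + 2 * 6 + (2 * m ^ 3 + 108 * m ^ 2 + 1918 * m + 11148) = ((m + 21) * (m + 20) * (m + 16)) * 2 := by ring
  have hpos : 0 ≤ 2 * m ^ 3 + 108 * m ^ 2 + 1918 * m + 11148 := Nat.zero_le _
  linarith

private lemma ineq3 (m : ℕ) : (m + 21) * (m + 20) * (m + 16) / 6 < (m + 20) * (m + 19) * (m + 18) / 6 := by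
  apply myDivLtDivAux (by norm_num) (by norm_num)
  have hR : ((m + 21) * (m + 20) * (m + 16)) * 6 + 6 * 6 + (36 * m + 684) = ((m + 20) * (m + 19) * (m + 18)) * 6 := by ring
  have hpos : 0 ≤ 36 * m + 684 := Nat.zero_le _
  linarith

private lemma ineq4 (m : ℕ) : (m + 20) * (m + 19) * (m + 18) / 6 < (m + 21) * (m + 19) * (m + 17) / 3 := by
  apply myDivLtDivAux (by norm_num) (by norm_num)
  have hR : ((m + 20) * (m + 19) * (m + 18)) * 3 + 6 * 3 + (3 * m ^ 3 + 171 * m ^ 2 + 3228 * m + 20160) = ((m + 21) * (m + 19) * (m + 17)) * 6 := by ring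
  have hpos : 0 ≤ 3 * m ^ 3 + 171 * m ^ 2 + 3228 * m + 20160 := Nat.zero_le _
  linarith

private lemma ineq5 (m : ℕ) : (m + 21) * (m + 19) * (m + 17) / 3 < (m + 21) * (m + 20) * (m + 19) * (m + 14) / 24 := by
  apply myDivLtDivAux (by norm_num) (by norm_num)
  have hR : ((m + 21) * (m + 19) * (m + 17)) * 24 + 3 * 24 + (3 * m ^ 4 + 198 * m ^ 3 + 4749 * m ^ 2 + 48402 * m + 172296) = ((m + 21) * (m + 20) * (m + 19) * (m + 14)) * 3 := by ring
  have hpos : 0 ≤ 3 * m ^ 4 + 198 * m ^ 3 + 4749 * m ^ 2 + 48402 * m + 172296 := Nat.zero_le _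
  linarith

private lemma ineq6 (m : ℕ) : (m + 21) * (m + 20) * (m + 19) * (m + 14) / 24 < (m + 20) * (m + 19) * (m + 18) * (m + 17) / 24 := by
  apply myDivLtDivAux (by norm_num) (by norm_num)
  have hR : ((m + 21) * (m + 20) * (m + 19) * (m + 14)) * 24 + 24 * 24 + (288 * m ^ 2 + 11232 * m + 108864) = ((m + 20) * (m + 19) * (m + 18) * (m + 17)) * 24 := by ring
  have hpos : 0 ≤ 288 * m ^ 2 + 11232 * m + 108864 := Nat.zero_le _
  linarith

private lemma ineq7 (m : ℕ) : (m + 20) * (m + 19) * (m + 18) * (m + 17) / 24 < (m + 21) * (m + 20) * (m + 17) * (m + 16) / 12 := by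
  apply myDivLtDivAux (by norm_num) (by norm_num)
  have hR : ((m + 20) * (m + 19) * (m + 18) * (m + 17)) * 12 + 24 * 12 + (12 * m ^ 4 + 888 * m ^ 3 + 24468 * m ^ 2 + 297480 * m + 1346112) = ((m + 21) * (m + 20) * (m + 17) * (m + 16)) * 24 := by ring
  have hpos : 0 ≤ 12 * m ^ 4 + 888 * m ^ 3 + 24468 * m ^ 2 + 297480 * m + 1346112 := Nat.zero_le _
  linarith

private lemma ineq8 (m : ℕ) : (m + 21) * (m + 20) * (m + 17) * (m + 16) / 12 < (m + 21) * (m + 20) * (m + 18) * (m + 15) / 8 := by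
  apply myDivLtDivAux (by norm_num) (by norm_num)
  have hR : ((m + 21) * (m + 20) * (m + 17) * (m + 16)) * 8 + 12 * 8 + (4 * m ^ 4 + 296 * m ^ 3 + 8156 * m ^ 2 + 99064 * m + 446784) = ((m + 21) * (m + 20) * (m + 18) * (m + 15)) * 12 := by ring
  have hpos : 0 ≤ 4 * m ^ 4 + 296 * m ^ 3 + 8156 * m ^ 2 + 99064 * m + 446784 := Nat.zero_le _
  linarith

private lemma ineq9 (m : ℕ) : (m + 21) * (m + 20) * (m + 18) * (m + 15) / 8 < (m + 21) * (m + 20) * (m + 19) * (m + 18) * (m + 12) / 120 := by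
  apply myDivLtDivAux (by norm_num) (by norm_num)
  have hR : ((m + 21) * (m + 20) * (m + 18) * (m + 15)) * 120 + 8 * 120 + (8 * m ^ 5 + 600 * m ^ 4 + 16840 * m ^ 3 + 210120 * m ^ 2 + 995472 * m + 180480) = ((m + 21) * (m + 20) * (m + 19) * (m + 18) * (m + 12)) * 8 := by ring
  have hpos : 0 ≤ 8 * m ^ 5 + 600 * m ^ 4 + 16840 * m ^ 3 + 210120 * m ^ 2 + 995472 * m + 180480 := Nat.zero_le _
  linarith

private lemma ineq10 (m : ℕ) : (m + 21) * (m + 20) * (m + 19) * (m + 18) * (m + 12) / 120 < (m + 21) * (m + 20) * (m + 19) * (m + 17) * (m + 13) / 24 := by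
  apply myDivLtDivAux (by norm_num) (by norm_num)
  have hR : ((m + 21) * (m + 20) * (m + 19) * (m + 18) * (m + 12)) * 24 + 120 * 24 + (96 * m ^ 5 + 8640 * m ^ 4 + 309240 * m ^ 3 + 5499360 * m ^ 2 + 48564264 * m + 170258400) = ((m + 21) * (m + 20) * (m + 19) * (m + 17) * (m + 13)) * 120 := by ring
  have hpos : 0 ≤ 96 * m ^ 5 + 8640 * m ^ 4 + 309240 * m ^ 3 + 5499360 * m ^ 2 + 48564264 * m + 170258400 := Nat.zero_le _
  linarith

private lemma ineq11 (m : ℕ) : (m + 21) * (m + 20) * (m + 19) * (m + 17) * (m + 13) / 24 < (m + 21) * (m + 20) * (m + 19) * (m + 16) * (m + 14) / 24 := by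
  apply myDivLtDivAux (by norm_num) (by norm_num)
  have hR : ((m + 21) * (m + 20) * (m + 19) * (m + 17) * (m + 13)) * 24 + 24 * 24 + (72 * m ^ 3 + 4320 * m ^ 2 + 86328 * m + 573984) = ((m + 21) * (m + 20) * (m + 19) * (m + 16) * (m + 14)) * 24 := by ring
  have hpos : 0 ≤ 72 * m ^ 3 + 4320 * m ^ 2 + 86328 * m + 573984 := Nat.zero_le _
  linarith

/-- For all `n ≥ 14` the 13 character degrees listed in `anDegrees n` are pairwise
distinct. -/
theorem anDegrees_nodup (n : ℕ) (hn : 14 ≤ n) : (anDegrees n).Nodup := by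
  rcases lt_or_ge n 21 with h | h
  · interval_cases n <;> decide
  · obtain ⟨m, rfl⟩ : ∃ m, n = m + 21 := ⟨n - 21, by omega⟩
    have s1 : m + 21 - 1 = m + 20 := by omega
    have s2 : m + 21 - 2 = m + 19 := by omega
    have s3 : m + 21 - 3 = m + 18 := by omega
    have s4 : m + 21 - 4 = m + 17 := by omega
    have s5 : m + 21 - 5 = m + 16 := by omega
    have s6 : m + 21 - 6 = m + 15 := by omega
    have s7 : m + 21 - 7 = m + 14 := by omega
    have s8 : m + 21 - 8 = m + 13 := by omega
    have s9 : m + 21 - 9 = m + 12 := by omega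
    have key : anDegrees (m + 21) = [(m + 20), (m + 21) * (m + 18) / 2, (m + 20) * (m + 19) / 2, (m + 21) * (m + 20) * (m + 16) / 6, (m + 21) * (m + 19) * (m + 17) / 3, (m + 20) * (m + 19) * (m + 18) / 6, (m + 21) * (m + 20) * (m + 19) * (m + 14) / 24, (m + 21) * (m + 20) * (m + 18) * (m + 15) / 8, (m + 21) * (m + 20) * (m + 17) * (m + 16) / 12, (m + 20) * (m + 19) * (m + 18) * (m + 17) / 24, (m + 21) * (m + 20) * (m + 19) * (m + 18) * (m + 12) / 120, (m + 21) * (m + 20) * (m + 19) * (m + 17) * (m + 13) / 24, (m + 21) * (m + 20) * (m + 19) * (m + 16) * (m + 14) / 24] := by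
      simp only [anDegrees, s1, s2, s3, s4, s5, s6, s7, s8, s9]
    rw [key]
    exact nodup13 _ _ _ _ _ _ _ _ _ _ _ _ _ (ineq0 m) (ineq1 m) (ineq2 m) (ineq3 m)
      (ineq4 m) (ineq5 m) (ineq6 m) (ineq7 m) (ineq8 m) (ineq9 m) (ineq10 m) (ineq11 m)
end

section
/- Let q² = 2^(2f+1) with f ≥ 1 and r = 2^(f+1). Then the set {1, (q⁴+1)(q²−1), q⁴(q²−1), q⁴(q⁴+1)/(q²−r+1), q⁴(q⁴+1)/(q²+r+1), 2q⁴(q⁴+1)/r} is not contained in {1, 2⁴·3²·7, 2⁵·3³, 2⁴·3³, 2⁵·3², 2⁵·7, 2³·3³, 3³·7}. -/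
/-- With `q² = 2^(2f+1)`, `f ≥ 1`, and `r = 2^(f+1)`, the codegree set of the Suzuki group
`²B₂(2^(2f+1))` is not contained in the codegree set of `U₃(3)`. -/
theorem cod_Suzuki_not_subset_codU33 (f : ℕ) (hf : 1 ≤ f) :
    ¬ ({1, ((2^(2*f+1))^2 + 1) * (2^(2*f+1) - 1), (2^(2*f+1))^2 * (2^(2*f+1) - 1),
        (2^(2*f+1))^2 * ((2^(2*f+1))^2 + 1) / (2^(2*f+1) - 2^(f+1) + 1),
        (2^(2*f+1))^2 * ((2^(2*f+1))^2 + 1) / (2^(2*f+1) + 2^(f+1) + 1),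
        2 * (2^(2*f+1))^2 * ((2^(2*f+1))^2 + 1) / 2^(f+1)} : Set ℕ) ⊆ codU33 := by
  intro h
  have hx : (2^(2*f+1))^2 * (2^(2*f+1) - 1) ∈ codU33 := by
    apply h
    simp [Set.mem_insert_iff]
  have h64 : (64:ℕ) ∣ (2^(2*f+1))^2 * (2^(2*f+1) - 1) := by
    apply Dvd.dvd.mul_right
    have h6 : (2:ℕ)^6 ∣ 2^((2*f+1)*2) := pow_dvd_pow 2 (by omega)
    simpa [pow_mul] using h6
  simp only [codU33, Set.mem_insert_iff, Set.mem_singleton_iff] at hx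
  rcases hx with h'|h'|h'|h'|h'|h'|h'|h' <;> rw [h'] at h64 <;> norm_num at h64
end
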